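/- For any prime p > 3 with p ≡ 2 (mod 3), and any odd a ≥ 1, the sum of the Catalan numbers ∑_{n=0}^{p^a - 1} C_n is congruent to -2 modulo p. -/

import Mathlib

/-
Since `(n + 1) C_n = C(2n, n)` and `(n + 1) C(2n + 2, n + 1) = 2 (2n + 1) C(2n, n)`, we have
`2 C_n + C(2n + 2, n + 1) = 4 C(2n, n)`, and summing gives
`2 ∑_{n<N} C_n + C(2N, N) = 3 ∑_{n<N} C(2n, n) + 1`. Modulo `p`, Lucas's theorem makes `C(2n, n)`
multiplicative in the base-`p` digits of `n`, so `C(2p^a, p^a) ≡ 2` and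
`∑_{n<p^a} C(2n, n) ≡ (∑_{n<p} C(2n, n))^a`. Writing `p = 2m + 1`, `C(2n, n) ≡ (-4)^n C(m, n)`, so the
inner sum is `(-3)^m ≡ (-3 / p) = (p / 3)` by Euler's criterion and quadratic reciprocity. Hence
`2 ∑_{n<p^a} C_n ≡ 3 (p / 3)^a - 1`, which is `-4` when `p ≡ 2 (mod 3)` and `a` is odd.
-/

open Finset Nat

theorem two_mul_catalan_add_centralBinom_succ (m : ℕ) :
    2 * catalan m + centralBinom (m + 1) = 4 * centralBinom m := by
  apply Nat.eq_of_mul_eq_mul_left m.succ_pos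
  linarith [succ_mul_catalan_eq_centralBinom m, succ_mul_centralBinom_succ m]

theorem two_mul_sum_catalan_add_centralBinom (N : ℕ) :
    2 * ∑ k ∈ range N, catalan k + centralBinom N = 3 * ∑ k ∈ range N, centralBinom k + 1 := by
  induction N with
  | zero => rfl
  | succ n ih =>
    simp only [sum_range_succ]
    linarith [two_mul_catalan_add_centralBinom_succ n]

theorem sum_range_mul_eq_mul_of_map_mul_add {R : Type*} [CommSemiring R] {f : ℕ → R} {p : ℕ}
    (hf : ∀ q r, r < p → f (q * p + r) = f q * f r) (n : ℕ) :
    ∑ k ∈ range (n * p), f k = (∑ k ∈ range n, f k) * ∑ r ∈ range p, f r := by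
  induction n with
  | zero => simp
  | succ n ih =>
    rw [succ_mul, sum_range_add, ih, sum_range_succ, add_mul,
      sum_congr rfl fun r hr => hf n r (mem_range.mp hr), ← mul_sum]

theorem sum_range_pow_eq_pow_of_map_mul_add {R : Type*} [CommSemiring R] {f : ℕ → R} {p : ℕ}
    (hf : ∀ q r, r < p → f (q * p + r) = f q * f r) (hf0 : f 0 = 1) (a : ℕ) :
    ∑ k ∈ range (p ^ a), f k = (∑ k ∈ range p, f k) ^ a := by
  induction a with
  | zero => simp [hf0]
  | succ a ih => rw [pow_succ, sum_range_mul_eq_mul_of_map_mul_add hf, ih, pow_succ]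

theorem natCast_ne_zero_of_pos_of_lt {p n : ℕ} (h0 : 0 < n) (hn : n < p) : (n : ZMod p) ≠ 0 :=
  (ZMod.natCast_eq_zero_iff n p).not.mpr (Nat.not_dvd_of_pos_of_lt h0 hn)

section Prime

variable {p : ℕ} [Fact p.Prime]

theorem choose_mul_add_mul_add_cast {a b c d : ℕ} (hb : b < p) (hd : d < p) :
    ((a * p + b).choose (c * p + d) : ZMod p) = a.choose c * b.choose d := by
  have div_eq {x y : ℕ} (hy : y < p) : (x * p + y) / p = x := by
    rw [add_comm, Nat.add_mul_div_right _ _ (hy.trans_le' (zero_le y)), Nat.div_eq_of_lt hy,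
      zero_add]
  have lucas := (ZMod.intCast_eq_intCast_iff _ _ p).mpr
    (Choose.choose_modEq_choose_mod_mul_choose_div (p := p) (n := a * p + b) (k := c * p + d))
  push_cast at lucas
  rw [mul_add_mod_of_lt hb, mul_add_mod_of_lt hd, div_eq hb, div_eq hd] at lucas
  rw [lucas, mul_comm]

theorem centralBinom_mul_add_cast {q r : ℕ} (hr : r < p) :
    (centralBinom (q * p + r) : ZMod p) = centralBinom q * centralBinom r := by
  simp only [centralBinom_eq_two_mul_choose]
  rcases lt_or_ge (2 * r) p with h | h
  · rw [show 2 * (q * p + r) = 2 * q * p + 2 * r by ring, choose_mul_add_mul_add_cast h hr]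
  · -- both sides vanish: `choose (2r - p) r = 0` on the left, `p ∣ choose (2r) r` on the right
    have hp_dvd : p ∣ (2 * r).choose r := (Fact.out : p.Prime).dvd_choose hr (by omega) h
    rw [show 2 * (q * p + r) = (2 * q + 1) * p + (2 * r - p) by zify [h]; ring,
      choose_mul_add_mul_add_cast (by omega) hr, choose_eq_zero_of_lt (by omega : 2 * r - p < r),
      (ZMod.natCast_eq_zero_iff _ p).mpr hp_dvd]
    simp

theorem centralBinom_pow_cast (a : ℕ) : (centralBinom (p ^ a) : ZMod p) = 2 := by
  induction a with
  | zero => rfl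
  | succ a ih =>
    have := centralBinom_mul_add_cast (p := p) (q := p ^ a) (r := 0) (Fact.out : p.Prime).pos
    rwa [add_zero, ← pow_succ, ih, centralBinom_zero, cast_one, mul_one] at this

/-- Modulo `p = 2m + 1` we have `m = -1/2`, and `C(2k, k) = (-4)^k C(-1/2, k)`. -/
theorem centralBinom_cast_eq_neg_four_pow_mul_choose {m k : ℕ} (hm : 2 * m + 1 = p)
    (hk : k ≤ m) : (centralBinom k : ZMod p) = (-4) ^ k * m.choose k := by
  induction k with
  | zero => simp
  | succ k ih =>
    have hm_cast : 2 * (m : ZMod p) + 1 = 0 := by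
      exact_mod_cast (show ((2 * m + 1 : ℕ) : ZMod p) = 0 by rw [hm, ZMod.natCast_self])
    have h_cb : ((k : ZMod p) + 1) * centralBinom (k + 1) = 2 * (2 * k + 1) * centralBinom k := by
      exact_mod_cast congrArg (Nat.cast : ℕ → ZMod p) (succ_mul_centralBinom_succ k)
    have h_choose : (m.choose (k + 1) : ZMod p) * (k + 1) = m.choose k * (m - k) := by
      have := congrArg (Nat.cast : ℕ → ZMod p) (choose_succ_right_eq m k)
      push_cast [Nat.cast_sub (by omega : k ≤ m)] at this
      exact this
    apply mul_left_cancel₀ (a := (k : ZMod p) + 1)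
      (by exact_mod_cast natCast_ne_zero_of_pos_of_lt k.succ_pos (by omega))
    rw [h_cb, ih (by omega)]
    linear_combination (2 * (-4) ^ k * m.choose k : ZMod p) * hm_cast - (-4) ^ (k + 1) * h_choose

theorem sum_range_centralBinom_cast_eq_neg_three_pow {m : ℕ} (hm : 2 * m + 1 = p) :
    ∑ k ∈ range p, (centralBinom k : ZMod p) = (-3) ^ m := by
  have h_vanish : ∀ k ∈ range p, k ∉ range (m + 1) → (centralBinom k : ZMod p) = 0 := by
    intro k hkp hkm
    rw [mem_range] at hkp hkm
    exact (ZMod.natCast_eq_zero_iff _ p).mpr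
      ((Fact.out : p.Prime).dvd_choose hkp (by omega) (by omega))
  rw [← sum_subset (range_subset_range.mpr (by omega)) h_vanish,
    sum_congr rfl fun k hk => centralBinom_cast_eq_neg_four_pow_mul_choose hm
      (Nat.lt_succ_iff.mp (mem_range.mp hk)),
    show (-3 : ZMod p) = -4 + 1 by norm_num, add_pow]
  simp

theorem legendreSym_neg_three (hp : p ≠ 2) : legendreSym p (-3) = legendreSym 3 p := by
  have : Fact (Nat.Prime 3) := ⟨Nat.prime_three⟩
  have h_rec := legendreSym.quadratic_reciprocity' (p := 3) (q := p) (by norm_num) hp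
  have h_neg_one : legendreSym p (-1) = (-1) ^ (p / 2) := by
    rw [legendreSym.at_neg_one hp, ZMod.χ₄_eq_neg_one_pow
      (Nat.odd_iff.mp ((Fact.out : p.Prime).odd_of_ne_two hp))]
  norm_num at h_rec
  rw [show (-3 : ℤ) = -1 * 3 by norm_num, legendreSym.mul, h_neg_one, h_rec]
  norm_num [← mul_assoc, ← pow_add, ← two_mul]

theorem sum_range_centralBinom_cast (hp : p ≠ 2) :
    ∑ k ∈ range p, (centralBinom k : ZMod p) = legendreSym 3 p := by
  have hm : 2 * (p / 2) + 1 = p := by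
    have := Nat.odd_iff.mp ((Fact.out : p.Prime).odd_of_ne_two hp)
    omega
  rw [sum_range_centralBinom_cast_eq_neg_three_pow hm, ← legendreSym_neg_three hp,
    legendreSym.eq_pow]
  norm_num

theorem sum_range_pow_centralBinom_cast (hp : p ≠ 2) (a : ℕ) :
    ∑ k ∈ range (p ^ a), (centralBinom k : ZMod p) = (legendreSym 3 p : ZMod p) ^ a := by
  rw [sum_range_pow_eq_pow_of_map_mul_add (fun q r hr => centralBinom_mul_add_cast hr)
    (by simp), sum_range_centralBinom_cast hp]

theorem two_mul_sum_range_pow_catalan_cast (hp : p ≠ 2) (a : ℕ) :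
    2 * ∑ k ∈ range (p ^ a), (catalan k : ZMod p) = 3 * (legendreSym 3 p : ZMod p) ^ a - 1 := by
  have h := congrArg (Nat.cast : ℕ → ZMod p) (two_mul_sum_catalan_add_centralBinom (p ^ a))
  push_cast at h
  rw [centralBinom_pow_cast, sum_range_pow_centralBinom_cast hp] at h
  linear_combination h

end Prime

theorem legendreSym_three_eq_neg_one_of_mod_three_eq_two {p : ℕ} (h3 : p % 3 = 2) :
    legendreSym 3 p = -1 := by
  have : Fact (Nat.Prime 3) := ⟨Nat.prime_three⟩
  rw [legendreSym.mod, show (p : ℤ) % (3 : ℕ) = 2 by omega]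
  decide

theorem stmt13_general (p a : ℕ) (hp : p.Prime) (hp3 : 3 < p) (h3 : p % 3 = 2) (hodd : Odd a) :
    (∑ n ∈ Finset.range (p^a), (catalan n : ℤ)) ≡ -2 [ZMOD (p : ℤ)] := by
  have : Fact p.Prime := ⟨hp⟩
  have h2 : (2 : ZMod p) ≠ 0 := by exact_mod_cast natCast_ne_zero_of_pos_of_lt two_pos (by omega)
  have h := two_mul_sum_range_pow_catalan_cast (p := p) (by omega) a
  rw [legendreSym_three_eq_neg_one_of_mod_three_eq_two h3, Int.cast_neg, Int.cast_one,
    hodd.neg_one_pow] at h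
  rw [← ZMod.intCast_eq_intCast_iff]
  push_cast
  apply mul_left_cancel₀ h2
  linear_combination h

theorem stmt13 (p a : ℕ) (hp : p.Prime) (hp3 : 3 < p) (h3 : p % 3 = 2) (ha : 1 ≤ a) (hodd : Odd a) :
    (∑ n ∈ Finset.range (p^a), (catalan n : ℤ)) ≡ -2 [ZMOD (p : ℤ)] :=
  stmt13_general p a hp hp3 h3 hodd
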